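/- arXiv:1608.06700 — 2 statements merged into one kernel-verified Lean document; each statement's English description precedes it below -/
import Mathlib

section
/- Roots of the second bicharacteristic speed (Lemma B.1): define d₂(θ) = v − c·G_s(θ). The function d₂ is strictly decreasing on [−π/2, π/2] and strictly increasing on [π/2, 3π/2], with maximum value v + c·√(g²²) attained at θ = −π/2 and minimum value v − c·√(g²²) attained at θ = π/2. If |v| < c·√(g²²), then d₂ has exactly two zeros in [−π/2, 3π/2), one lying in the open interval (−π/2, π/2) and one in (π/2, 3π/2); if |v| ≥ c·√(g²²), then d₂ has at most one zero in [−π/2, 3π/2). -/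
open Real Matrix

noncomputable def swK (g11 g12 g22 θ : ℝ) : ℝ :=
  Real.sqrt (g11 * Real.cos θ ^ 2 + 2 * g12 * Real.sin θ * Real.cos θ + g22 * Real.sin θ ^ 2)

noncomputable def swC (g h : ℝ) : ℝ := Real.sqrt (g * h)

noncomputable def swGc (g11 g12 g22 θ : ℝ) : ℝ :=
  (g11 * Real.cos θ + g12 * Real.sin θ) / swK g11 g12 g22 θ

noncomputable def swGs (g11 g12 g22 θ : ℝ) : ℝ :=
  (g12 * Real.cos θ + g22 * Real.sin θ) / swK g11 g12 g22 θ

/-!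
The derivative of `G_s` is `(g¹¹g²² - (g¹²)²) cos θ / K_θ³`, which has the sign of `cos θ`, so
`d₂ = v - c G_s` falls strictly on `[-π/2, π/2]` and rises strictly on `[π/2, 3π/2]`, taking the
same value `v + c√g²²` at both ends. The zeros of such a valley are located by the signs of its
bottom and end values: two zeros when the bottom is negative and the ends positive, at most one
when the bottom is nonnegative or the ends are nonpositive.
-/

open Set

def StrictValleyOn {α β : Type*} [Preorder α] [Preorder β] (f : α → β) (a m b : α) : Prop :=
  StrictAntiOn f (Icc a m) ∧ StrictMonoOn f (Icc m b)

namespace StrictValleyOn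

section LinearOrder

variable {α β : Type*} [LinearOrder α] [LinearOrder β] {f : α → β} {a m b x : α}

theorem apply_lt (hf : StrictValleyOn f a m b) (hx : x ∈ Icc a b) (hxm : x ≠ m) : f m < f x := by
  rcases hxm.lt_or_gt with h | h
  · exact hf.1 ⟨hx.1, h.le⟩ ⟨hx.1.trans h.le, le_rfl⟩ h
  · exact hf.2 ⟨le_rfl, h.le.trans hx.2⟩ ⟨h.le, hx.2⟩ h

theorem le_apply (hf : StrictValleyOn f a m b) (hx : x ∈ Icc a b) : f m ≤ f x := by
  rcases eq_or_ne x m with rfl | h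
  · rfl
  · exact (hf.apply_lt hx h).le

theorem apply_lt_max (hf : StrictValleyOn f a m b) (hx : x ∈ Ioo a b) :
    f x < max (f a) (f b) := by
  rcases le_or_gt x m with h | h
  · exact lt_max_of_lt_left (hf.1 ⟨le_rfl, hx.1.le.trans h⟩ ⟨hx.1.le, h⟩ hx.1)
  · exact lt_max_of_lt_right (hf.2 ⟨h.le, hx.2.le⟩ ⟨h.le.trans hx.2.le, le_rfl⟩ hx.2)

theorem apply_le_max (hf : StrictValleyOn f a m b) (hx : x ∈ Icc a b) :
    f x ≤ max (f a) (f b) := by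
  rcases hx.1.eq_or_lt with rfl | ha
  · exact le_max_left _ _
  rcases hx.2.eq_or_lt with rfl | hb
  · exact le_max_right _ _
  exact (hf.apply_lt_max ⟨ha, hb⟩).le

variable [Zero β]

theorem subsingleton_zeros_of_nonneg (hf : StrictValleyOn f a m b) (hm : 0 ≤ f m) :
    {x ∈ Icc a b | f x = 0}.Subsingleton := by
  refine (subsingleton_singleton (a := m)).anti ?_
  rintro x ⟨hx, hx0⟩
  by_contra hxm
  exact (hf.apply_lt hx hxm).not_ge (hx0 ▸ hm)

theorem subsingleton_zeros_Ico_of_nonpos (hf : StrictValleyOn f a m b) (ha : f a ≤ 0)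
    (hb : f b ≤ 0) : {x ∈ Ico a b | f x = 0}.Subsingleton := by
  refine (subsingleton_singleton (a := a)).anti ?_
  rintro x ⟨hx, hx0⟩
  by_contra hxa
  have := hf.apply_lt_max ⟨hx.1.lt_of_ne (Ne.symm hxa), hx.2⟩
  exact (max_le ha hb).not_gt (hx0 ▸ this)

end LinearOrder

variable {α β : Type*} [ConditionallyCompleteLinearOrder α] [DenselyOrdered α]
  [TopologicalSpace α] [OrderTopology α] [LinearOrder β] [TopologicalSpace β]
  [OrderClosedTopology β] [Zero β] {f : α → β} {a m b : α}

theorem exists_two_zeros (hf : StrictValleyOn f a m b) (hcont : ContinuousOn f (Icc a b))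
    (hmem : m ∈ Icc a b) (ha : 0 < f a) (hm : f m < 0) (hb : 0 < f b) :
    ∃ x₁ ∈ Ioo a m, ∃ x₂ ∈ Ioo m b, f x₁ = 0 ∧ f x₂ = 0 ∧
      ∀ x ∈ Icc a b, f x = 0 → x = x₁ ∨ x = x₂ := by
  obtain ⟨x₁, hx₁, hx₁0⟩ := intermediate_value_Ioo' hmem.1
    (hcont.mono (Icc_subset_Icc_right hmem.2)) ⟨hm, ha⟩
  obtain ⟨x₂, hx₂, hx₂0⟩ := intermediate_value_Ioo hmem.2
    (hcont.mono (Icc_subset_Icc_left hmem.1)) ⟨hm, hb⟩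
  refine ⟨x₁, hx₁, x₂, hx₂, hx₁0, hx₂0, fun x hx hx0 => ?_⟩
  rcases le_or_gt x m with h | h
  · exact .inl <| hf.1.injOn ⟨hx.1, h⟩ (Ioo_subset_Icc_self hx₁) (hx0.trans hx₁0.symm)
  · exact .inr <| hf.2.injOn ⟨h.le, hx.2⟩ (Ioo_subset_Icc_self hx₂) (hx0.trans hx₂0.symm)

end StrictValleyOn

theorem quadratic_form_pos {a b d x y : ℝ} (ha : 0 < a) (hdet : 0 < a * d - b ^ 2)
    (hxy : x ≠ 0 ∨ y ≠ 0) : 0 < a * x ^ 2 + 2 * b * x * y + d * y ^ 2 := by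
  rcases eq_or_ne y 0 with rfl | hy
  · have hx : x ≠ 0 := hxy.resolve_right (not_not.mpr rfl)
    simpa using mul_pos ha (by positivity : 0 < x ^ 2)
  · have hsq : a * (a * x ^ 2 + 2 * b * x * y + d * y ^ 2)
        = (a * x + b * y) ^ 2 + (a * d - b ^ 2) * y ^ 2 := by ring
    refine pos_of_mul_pos_right (hsq ▸ ?_) ha.le
    exact add_pos_of_nonneg_of_pos (sq_nonneg _) (mul_pos hdet (by positivity))

section Speed

variable {g11 g12 g22 : ℝ}

theorem swK_radicand_pos (h11 : 0 < g11) (hdet : 0 < g11 * g22 - g12 ^ 2) (θ : ℝ) :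
    0 < g11 * cos θ ^ 2 + 2 * g12 * sin θ * cos θ + g22 * sin θ ^ 2 := by
  have hcs : cos θ ≠ 0 ∨ sin θ ≠ 0 := by
    by_contra! h
    simpa [h.1, h.2] using sin_sq_add_cos_sq θ
  exact (quadratic_form_pos h11 hdet hcs).trans_eq (by ring)

theorem swK_pos (h11 : 0 < g11) (hdet : 0 < g11 * g22 - g12 ^ 2) (θ : ℝ) :
    0 < swK g11 g12 g22 θ :=
  sqrt_pos.mpr (swK_radicand_pos h11 hdet θ)

theorem hasDerivAt_swK (h11 : 0 < g11) (hdet : 0 < g11 * g22 - g12 ^ 2) (θ : ℝ) :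
    HasDerivAt (swK g11 g12 g22)
      (((g22 - g11) * sin θ * cos θ + g12 * (cos θ ^ 2 - sin θ ^ 2)) / swK g11 g12 g22 θ) θ := by
  have hc := hasDerivAt_cos θ
  have hs := hasDerivAt_sin θ
  have hQ : HasDerivAt (fun x => g11 * cos x ^ 2 + 2 * g12 * sin x * cos x + g22 * sin x ^ 2)
      (2 * ((g22 - g11) * sin θ * cos θ + g12 * (cos θ ^ 2 - sin θ ^ 2))) θ :=
    ((((hc.pow 2).const_mul g11).add ((hs.const_mul (2 * g12)).mul hc)).add
      ((hs.pow 2).const_mul g22)).congr_deriv (by ring)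
  refine (hQ.sqrt (swK_radicand_pos h11 hdet θ).ne').congr_deriv ?_
  change _ / (2 * swK g11 g12 g22 θ) = _
  field_simp

theorem hasDerivAt_swGs (h11 : 0 < g11) (hdet : 0 < g11 * g22 - g12 ^ 2) (θ : ℝ) :
    HasDerivAt (swGs g11 g12 g22)
      ((g11 * g22 - g12 ^ 2) * cos θ / swK g11 g12 g22 θ ^ 3) θ := by
  have hK2 : swK g11 g12 g22 θ ^ 2
      = g11 * cos θ ^ 2 + 2 * g12 * sin θ * cos θ + g22 * sin θ ^ 2 :=
    sq_sqrt (swK_radicand_pos h11 hdet θ).le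
  have hB : HasDerivAt (fun x => g12 * cos x + g22 * sin x) (g22 * cos θ - g12 * sin θ) θ :=
    (((hasDerivAt_cos θ).const_mul g12).add ((hasDerivAt_sin θ).const_mul g22)).congr_deriv
      (by ring)
  have hK := (swK_pos h11 hdet θ).ne'
  refine (hB.div (hasDerivAt_swK h11 hdet θ) hK).congr_deriv ?_
  field_simp
  linear_combination (cos θ * (g11 * g22 - g12 ^ 2)) * sin_sq_add_cos_sq θ
    + (g22 * cos θ - g12 * sin θ) * hK2

theorem continuous_swGs (h11 : 0 < g11) (hdet : 0 < g11 * g22 - g12 ^ 2) :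
    Continuous (swGs g11 g12 g22) :=
  continuous_iff_continuousAt.mpr fun θ => (hasDerivAt_swGs h11 hdet θ).continuousAt

theorem swGs_strictMonoOn (h11 : 0 < g11) (hdet : 0 < g11 * g22 - g12 ^ 2) :
    StrictMonoOn (swGs g11 g12 g22) (Icc (-(π / 2)) (π / 2)) := by
  refine strictMonoOn_of_deriv_pos (convex_Icc _ _) (continuous_swGs h11 hdet).continuousOn
    fun θ hθ => ?_
  rw [interior_Icc] at hθ
  rw [(hasDerivAt_swGs h11 hdet θ).deriv]
  exact div_pos (mul_pos hdet (cos_pos_of_mem_Ioo hθ)) (pow_pos (swK_pos h11 hdet θ) 3)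

theorem swGs_strictAntiOn (h11 : 0 < g11) (hdet : 0 < g11 * g22 - g12 ^ 2) :
    StrictAntiOn (swGs g11 g12 g22) (Icc (π / 2) (3 * π / 2)) := by
  refine strictAntiOn_of_deriv_neg (convex_Icc _ _) (continuous_swGs h11 hdet).continuousOn
    fun θ hθ => ?_
  rw [interior_Icc] at hθ
  rw [(hasDerivAt_swGs h11 hdet θ).deriv]
  have hcos : cos θ < 0 := cos_neg_of_pi_div_two_lt_of_lt hθ.1 (by linarith [hθ.2])
  exact div_neg_of_neg_of_pos (mul_neg_of_pos_of_neg hdet hcos) (pow_pos (swK_pos h11 hdet θ) 3)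

theorem swGs_pi_div_two : swGs g11 g12 g22 (π / 2) = √g22 := by
  simp [swGs, swK, div_sqrt]

theorem swGs_neg_pi_div_two : swGs g11 g12 g22 (-(π / 2)) = -√g22 := by
  simp [swGs, swK, neg_div, div_sqrt]

theorem swGs_three_pi_div_two : swGs g11 g12 g22 (3 * π / 2) = -√g22 := by
  rw [show 3 * π / 2 = -(π / 2) + 2 * π by ring, swGs, swK, cos_add_two_pi, sin_add_two_pi]
  exact swGs_neg_pi_div_two

end Speed

theorem roots_second_bicharacteristic_speed_general
    (g h v g11 g12 g22 : ℝ) (hg : 0 < g) (hh : 0 < h)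
    (h11 : 0 < g11) (hdet : 0 < g11 * g22 - g12 ^ 2) :
    let c := swC g h
    let d2 : ℝ → ℝ := fun θ => v - c * swGs g11 g12 g22 θ
    StrictAntiOn d2 (Set.Icc (-(π / 2)) (π / 2)) ∧
    StrictMonoOn d2 (Set.Icc (π / 2) (3 * π / 2)) ∧
    d2 (-(π / 2)) = v + c * Real.sqrt g22 ∧
    d2 (π / 2) = v - c * Real.sqrt g22 ∧
    (∀ θ ∈ Set.Icc (-(π / 2)) (3 * π / 2), d2 θ ≤ d2 (-(π / 2)) ∧ d2 (π / 2) ≤ d2 θ) ∧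
    (|v| < c * Real.sqrt g22 →
      ∃ θ1 ∈ Set.Ioo (-(π / 2)) (π / 2), ∃ θ2 ∈ Set.Ioo (π / 2) (3 * π / 2),
        d2 θ1 = 0 ∧ d2 θ2 = 0 ∧
        ∀ θ ∈ Set.Ico (-(π / 2)) (3 * π / 2), d2 θ = 0 → θ = θ1 ∨ θ = θ2) ∧
    (c * Real.sqrt g22 ≤ |v| →
      {θ ∈ Set.Ico (-(π / 2)) (3 * π / 2) | d2 θ = 0}.Subsingleton) := by
  intro c d2
  have hc : 0 < c := sqrt_pos.mpr (mul_pos hg hh)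
  have hvalley : StrictValleyOn d2 (-(π / 2)) (π / 2) (3 * π / 2) :=
    ⟨fun _ hx _ hy hxy => sub_lt_sub_left
        (mul_lt_mul_of_pos_left (swGs_strictMonoOn h11 hdet hx hy hxy) hc) v,
      fun _ hx _ hy hxy => sub_lt_sub_left
        (mul_lt_mul_of_pos_left (swGs_strictAntiOn h11 hdet hx hy hxy) hc) v⟩
  have hcont : Continuous d2 :=
    continuous_const.sub (continuous_const.mul (continuous_swGs h11 hdet))
  have hmem : π / 2 ∈ Icc (-(π / 2)) (3 * π / 2) := ⟨by linarith [pi_pos], by linarith [pi_pos]⟩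
  have ha : d2 (-(π / 2)) = v + c * √g22 := by simp only [d2, swGs_neg_pi_div_two]; ring
  have hm : d2 (π / 2) = v - c * √g22 := by simp only [d2, swGs_pi_div_two]
  have hb : d2 (3 * π / 2) = d2 (-(π / 2)) := by
    simp only [d2, swGs_three_pi_div_two, swGs_neg_pi_div_two]
  refine ⟨hvalley.1, hvalley.2, ha, hm,
    fun θ hθ => ⟨(hvalley.apply_le_max hθ).trans_eq (by rw [hb, max_self]), hvalley.le_apply hθ⟩,
    fun hv => ?_, fun hv => ?_⟩
  · obtain ⟨hv₁, hv₂⟩ := abs_lt.mp hv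
    obtain ⟨θ₁, h₁, θ₂, h₂, h₁0, h₂0, huniq⟩ := hvalley.exists_two_zeros hcont.continuousOn hmem
      (by rw [ha]; linarith) (by rw [hm]; linarith) (by rw [hb, ha]; linarith)
    exact ⟨θ₁, h₁, θ₂, h₂, h₁0, h₂0, fun θ hθ => huniq θ (Ico_subset_Icc_self hθ)⟩
  · rcases le_abs.mp hv with hv | hv
    · exact (hvalley.subsingleton_zeros_of_nonneg (by rw [hm]; linarith)).anti
        fun θ hθ => ⟨Ico_subset_Icc_self hθ.1, hθ.2⟩
    · exact hvalley.subsingleton_zeros_Ico_of_nonpos (by rw [ha]; linarith)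
        (by rw [hb, ha]; linarith)

/-- Roots of the second bicharacteristic speed (Lemma B.1). -/
theorem roots_second_bicharacteristic_speed
    (g h u v g11 g12 g22 : ℝ) (hg : 0 < g) (hh : 0 < h)
    (h11 : 0 < g11) (hdet : 0 < g11 * g22 - g12 ^ 2) :
    let c := swC g h
    let d2 : ℝ → ℝ := fun θ => v - c * swGs g11 g12 g22 θ
    StrictAntiOn d2 (Set.Icc (-(π / 2)) (π / 2)) ∧
    StrictMonoOn d2 (Set.Icc (π / 2) (3 * π / 2)) ∧
    d2 (-(π / 2)) = v + c * Real.sqrt g22 ∧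
    d2 (π / 2) = v - c * Real.sqrt g22 ∧
    (∀ θ ∈ Set.Icc (-(π / 2)) (3 * π / 2), d2 θ ≤ d2 (-(π / 2)) ∧ d2 (π / 2) ≤ d2 θ) ∧
    (|v| < c * Real.sqrt g22 →
      ∃ θ1 ∈ Set.Ioo (-(π / 2)) (π / 2), ∃ θ2 ∈ Set.Ioo (π / 2) (3 * π / 2),
        d2 θ1 = 0 ∧ d2 θ2 = 0 ∧
        ∀ θ ∈ Set.Ico (-(π / 2)) (3 * π / 2), d2 θ = 0 → θ = θ1 ∨ θ = θ2) ∧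
    (c * Real.sqrt g22 ≤ |v| →
      {θ ∈ Set.Ico (-(π / 2)) (3 * π / 2) | d2 θ = 0}.Subsingleton) :=
  roots_second_bicharacteristic_speed_general g h v g11 g12 g22 hg hh h11 hdet
end

section
/- Evaluation of J₃ (formula (j3)): if H := (g¹¹)² + (g²²)² − 2g¹¹g²² + 4(g¹²)² > 0, then (1/(2π)) · ∫₀^{2π} cos²θ / K_θ² dθ = (1/H) · ( ((g²²)² − g¹¹g²² + 2(g¹²)²)·Λ + g¹¹ − g²² ), where Λ = (g¹¹g²² − (g¹²)²)^{−1/2}. -/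
/-!
Write `K θ = g¹¹cos²θ + 2g¹²sinθcosθ + g²²sin²θ`. Since `cos 2θ` and `sin 2θ` are linear
combinations of `K - (g¹¹ + g²²)/2` and `K'`, the product `H cos²θ` is an affine combination of
`K`, `K'` and `1`. Over a period `K'/K = (log K)'` integrates to zero, so everything reduces to
`∫₀^{2π} dθ / K = 2π / √det g`, which follows from an explicit continuous primitive.
-/

open Real

noncomputable section

def trigQuadForm (a b d θ : ℝ) : ℝ :=
  a * cos θ ^ 2 + 2 * b * sin θ * cos θ + d * sin θ ^ 2

def trigQuadFormDeriv (a b d θ : ℝ) : ℝ :=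
  2 * (d - a) * sin θ * cos θ + 2 * b * (cos θ ^ 2 - sin θ ^ 2)

variable {a b d : ℝ}

theorem trigQuadForm_pos (ha : 0 < a) (hdet : 0 < a * d - b ^ 2) (θ : ℝ) :
    0 < trigQuadForm a b d θ := by
  have hs := sin_sq_add_cos_sq θ
  have hd : 0 < d := by nlinarith [sq_nonneg b]
  have key : (a + d) * trigQuadForm a b d θ =
      (a * cos θ + b * sin θ) ^ 2 + (b * cos θ + d * sin θ) ^ 2 + (a * d - b ^ 2) := by
    unfold trigQuadForm; linear_combination (a * d - b ^ 2) * hs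
  nlinarith [sq_nonneg (a * cos θ + b * sin θ), sq_nonneg (b * cos θ + d * sin θ)]

theorem continuous_trigQuadForm : Continuous (trigQuadForm a b d) := by
  unfold trigQuadForm; fun_prop

theorem continuous_trigQuadFormDeriv : Continuous (trigQuadFormDeriv a b d) := by
  unfold trigQuadFormDeriv; fun_prop

theorem hasDerivAt_trigQuadForm (θ : ℝ) :
    HasDerivAt (trigQuadForm a b d) (trigQuadFormDeriv a b d θ) θ := by
  have h1 := ((hasDerivAt_cos θ).pow 2).const_mul a
  have h2 := ((hasDerivAt_sin θ).const_mul (2 * b)).mul (hasDerivAt_cos θ)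
  have h3 := ((hasDerivAt_sin θ).pow 2).const_mul d
  unfold trigQuadForm trigQuadFormDeriv
  exact ((h1.add h2).add h3).congr_deriv (by ring)

theorem hasDerivAt_trigQuadFormDeriv (θ : ℝ) :
    HasDerivAt (trigQuadFormDeriv a b d)
      (2 * (d - a) * (cos θ ^ 2 - sin θ ^ 2) - 8 * b * sin θ * cos θ) θ := by
  have h1 := ((hasDerivAt_sin θ).const_mul (2 * (d - a))).mul (hasDerivAt_cos θ)
  have h2 := (((hasDerivAt_cos θ).pow 2).sub ((hasDerivAt_sin θ).pow 2)).const_mul (2 * b)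
  unfold trigQuadFormDeriv
  exact (h1.add h2).congr_deriv (by ring)

/-- With `D = √(ad - b²)` and `G = !![a, b; b, d]`, the function is the polar angle of
`(G + D • 1) (cos t, sin t)`: `det (G + D • 1) = D (a + d + 2D)` and
`|(G + D • 1) u|² = (a + d + 2D) K` give the derivative `D / K`, and `uᵀ (G + D • 1) u = K + D > 0`
keeps the `arctan` branch continuous. -/
theorem hasDerivAt_trigQuadForm_angle {D : ℝ} (ha : 0 < a) (hD : 0 < D)
    (hD2 : D ^ 2 = a * d - b ^ 2) (θ : ℝ) :
    HasDerivAt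
      (fun t => t + arctan (trigQuadFormDeriv a b d t / (2 * (trigQuadForm a b d t + D))))
      (D / trigQuadForm a b d θ) θ := by
  have hK := trigQuadForm_pos ha (hD2 ▸ pow_pos hD 2) θ
  have hd : 0 < d := by nlinarith [sq_nonneg b]
  have hM : 2 * (trigQuadForm a b d θ + D) ≠ 0 := by positivity
  have hs := sin_sq_add_cos_sq θ
  have hnorm : (2 * (trigQuadForm a b d θ + D)) ^ 2 + trigQuadFormDeriv a b d θ ^ 2 =
      4 * (a + d + 2 * D) * trigQuadForm a b d θ := by
    unfold trigQuadForm trigQuadFormDeriv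
    linear_combination 4 * hD2 + 4 * ((a + d) * (a * cos θ ^ 2 + 2 * b * sin θ * cos θ +
      d * sin θ ^ 2) - (a * d - b ^ 2) * (sin θ ^ 2 + cos θ ^ 2 + 1)) * hs
  have hcross : (2 * (d - a) * (cos θ ^ 2 - sin θ ^ 2) - 8 * b * sin θ * cos θ) *
        (2 * (trigQuadForm a b d θ + D)) -
        trigQuadFormDeriv a b d θ * (2 * trigQuadFormDeriv a b d θ) =
      4 * (D - trigQuadForm a b d θ) * (a + d + 2 * D) := by
    unfold trigQuadForm trigQuadFormDeriv
    linear_combination 4 * ((a + d) * (D - (a * cos θ ^ 2 + 2 * b * sin θ * cos θ +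
      d * sin θ ^ 2)) + 2 * (a * d - b ^ 2) * (sin θ ^ 2 + cos θ ^ 2 + 1)) * hs - 8 * hD2
  have hquot := (hasDerivAt_trigQuadFormDeriv (a := a) (b := b) (d := d) θ).div
    (((hasDerivAt_trigQuadForm θ).add_const D).const_mul 2) hM
  refine ((hasDerivAt_id θ).add hquot.arctan).congr_deriv ?_
  rw [Pi.div_apply]
  generalize trigQuadForm a b d θ = K at *
  generalize trigQuadFormDeriv a b d θ = K' at *
  generalize 2 * (d - a) * (cos θ ^ 2 - sin θ ^ 2) - 8 * b * sin θ * cos θ = K'' at *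
  have hc : a + d + 2 * D ≠ 0 := by positivity
  rw [div_pow, one_add_div (pow_ne_zero 2 hM), hnorm]
  field_simp
  linear_combination hcross

theorem integral_inv_trigQuadForm (ha : 0 < a) (hdet : 0 < a * d - b ^ 2) :
    ∫ θ in (0 : ℝ)..2 * π, 1 / trigQuadForm a b d θ = 2 * π / √(a * d - b ^ 2) := by
  set D := √(a * d - b ^ 2)
  have hD : 0 < D := sqrt_pos.2 hdet
  have hderiv : ∀ θ ∈ Set.uIcc 0 (2 * π), HasDerivAt
      (fun t => (t + arctan (trigQuadFormDeriv a b d t / (2 * (trigQuadForm a b d t + D)))) / D)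
      (1 / trigQuadForm a b d θ) θ := fun θ _ =>
    ((hasDerivAt_trigQuadForm_angle ha hD (sq_sqrt hdet.le) θ).div_const D).congr_deriv
      (by field_simp)
  have hint : Continuous fun θ => 1 / trigQuadForm a b d θ :=
    continuous_const.div continuous_trigQuadForm fun θ => (trigQuadForm_pos ha hdet θ).ne'
  rw [intervalIntegral.integral_eq_sub_of_hasDerivAt hderiv (hint.intervalIntegrable _ _)]
  simp only [trigQuadForm, trigQuadFormDeriv, sin_two_pi, cos_two_pi, sin_zero, cos_zero]
  ring

theorem integral_trigQuadFormDeriv_div (ha : 0 < a) (hdet : 0 < a * d - b ^ 2) :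
    ∫ θ in (0 : ℝ)..2 * π, trigQuadFormDeriv a b d θ / trigQuadForm a b d θ = 0 := by
  have hK θ := (trigQuadForm_pos ha hdet θ).ne'
  rw [intervalIntegral.integral_eq_sub_of_hasDerivAt
    (fun θ _ => (hasDerivAt_trigQuadForm θ).log (hK θ))
    ((continuous_trigQuadFormDeriv.div continuous_trigQuadForm hK).intervalIntegrable _ _)]
  simp [trigQuadForm]

theorem cos_sq_mul_discr_eq (θ : ℝ) :
    cos θ ^ 2 * (a ^ 2 + d ^ 2 - 2 * a * d + 4 * b ^ 2) =
      (a - d) * trigQuadForm a b d θ + b * trigQuadFormDeriv a b d θ +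
        (d ^ 2 - a * d + 2 * b ^ 2) := by
  unfold trigQuadForm trigQuadFormDeriv
  linear_combination (d ^ 2 - a * d + 2 * b ^ 2) * sin_sq_add_cos_sq θ

end

/-- Evaluation of `J₃` (formula (j3)). -/
theorem J3_eval (g11 g12 g22 : ℝ) (h11 : 0 < g11) (hdet : 0 < g11 * g22 - g12 ^ 2)
    (hH : 0 < g11 ^ 2 + g22 ^ 2 - 2 * g11 * g22 + 4 * g12 ^ 2) :
    (1 / (2 * π)) *
      ∫ θ in (0:ℝ)..(2 * π),
        Real.cos θ ^ 2 /
          (g11 * Real.cos θ ^ 2 + 2 * g12 * Real.sin θ * Real.cos θ +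
            g22 * Real.sin θ ^ 2)
    = (1 / (g11 ^ 2 + g22 ^ 2 - 2 * g11 * g22 + 4 * g12 ^ 2)) *
        ((g22 ^ 2 - g11 * g22 + 2 * g12 ^ 2) * (1 / Real.sqrt (g11 * g22 - g12 ^ 2)) +
          g11 - g22) := by
  set H := g11 ^ 2 + g22 ^ 2 - 2 * g11 * g22 + 4 * g12 ^ 2
  set K := trigQuadForm g11 g12 g22
  set K' := trigQuadFormDeriv g11 g12 g22
  have hHne : H ≠ 0 := hH.ne'
  have hK θ : K θ ≠ 0 := (trigQuadForm_pos h11 hdet θ).ne'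
  have hsplit θ : cos θ ^ 2 / K θ = (g11 - g22) / H +
      (g12 / H * (K' θ / K θ) + (g22 ^ 2 - g11 * g22 + 2 * g12 ^ 2) / H * (1 / K θ)) := by
    have hKθ := hK θ
    field_simp
    linear_combination cos_sq_mul_discr_eq (a := g11) (b := g12) (d := g22) θ
  have hlog : Continuous fun θ => g12 / H * (K' θ / K θ) :=
    continuous_const.mul (continuous_trigQuadFormDeriv.div continuous_trigQuadForm hK)
  have hinv : Continuous fun θ => (g22 ^ 2 - g11 * g22 + 2 * g12 ^ 2) / H * (1 / K θ) :=
    continuous_const.mul (continuous_const.div continuous_trigQuadForm hK)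
  have hsum : Continuous fun θ => g12 / H * (K' θ / K θ) +
      (g22 ^ 2 - g11 * g22 + 2 * g12 ^ 2) / H * (1 / K θ) := hlog.add hinv
  change 1 / (2 * π) * ∫ θ in (0 : ℝ)..2 * π, cos θ ^ 2 / K θ = _
  rw [intervalIntegral.integral_congr fun θ _ => hsplit θ,
    intervalIntegral.integral_add intervalIntegrable_const
      (hsum.intervalIntegrable _ _),
    intervalIntegral.integral_add (hlog.intervalIntegrable _ _) (hinv.intervalIntegrable _ _),
    intervalIntegral.integral_const, intervalIntegral.integral_const_mul,
    intervalIntegral.integral_const_mul, integral_trigQuadFormDeriv_div h11 hdet,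
    integral_inv_trigQuadForm h11 hdet, sub_zero, smul_eq_mul]
  field_simp
  ring
end
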